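/- Let H be a complex Hilbert space, Π an orthogonal projection on H, and χ a bounded self-adjoint operator on H with χ² ≤ 1 in the Loewner order. Define X = ΠχΠ + (1−Π)χ(1−Π). If Q is a bounded self-adjoint operator on H with −Π ≤ Q ≤ 1−Π, then −Π ≤ X Q X ≤ 1 − Π. -/

import Mathlib

open scoped ComplexOrder

/-- The Loewner order on bounded operators on a complex Hilbert space:
`A ≤ B` iff `⟨x, (B - A) x⟩ ≥ 0` for all `x`. -/
def LoewnerLE {H : Type*} [NormedAddCommGroup H] [InnerProductSpace ℂ H]
    (A B : H →L[ℂ] H) : Prop :=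
  ∀ x : H, (0 : ℂ) ≤ (inner ℂ x ((B - A) x) : ℂ)

/-!
Work in the Loewner order of a star-ordered ring. The localization `X` of `χ` is self-adjoint
and satisfies `P X = X P = P χ P`, so `X P X = P χ P χ P ≤ P χ χ P ≤ P`; conjugating `-P ≤ Q`
by `X` then gives `-P ≤ -(X P X) ≤ X Q X`. The upper bound is the lower bound for `1 - P` and
`-Q`, because the localization is symmetric in `P` and `1 - P`.
-/

section Localization

variable {R : Type*} [Ring R]

def localization (p a : R) : R := p * a * p + (1 - p) * a * (1 - p)

theorem localization_one_sub (p a : R) : localization (1 - p) a = localization p a := by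
  simp only [localization, sub_sub_cancel]
  abel

end Localization

namespace IsStarProjection

variable {R : Type*} [Ring R] [StarRing R] {p : R}

theorem mul_localization (hp : IsStarProjection p) (a : R) :
    p * localization p a = p * a * p := by
  simp only [localization, mul_add, ← mul_assoc, hp.isIdempotentElem.eq, hp.mul_one_sub_self,
    zero_mul, add_zero]

theorem localization_mul (hp : IsStarProjection p) (a : R) :
    localization p a * p = p * a * p := by
  simp only [localization, add_mul, mul_assoc, hp.isIdempotentElem.eq, hp.one_sub_mul_self,
    mul_zero, add_zero]

theorem isSelfAdjoint_localization (hp : IsStarProjection p) {a : R} (ha : IsSelfAdjoint a) :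
    IsSelfAdjoint (localization p a) :=
  (ha.conjugate_self hp.isSelfAdjoint).add (ha.conjugate_self hp.one_sub.isSelfAdjoint)

variable [PartialOrder R] [StarOrderedRing R]

theorem conjugate_conjugate_le_self (hp : IsStarProjection p) {c : R} (hc : IsSelfAdjoint c)
    (hc1 : c * c ≤ 1) : p * c * p * c * p ≤ p := by
  have hcpc : c * p * c ≤ 1 :=
    calc c * p * c ≤ c * 1 * c := hc.conjugate_le_conjugate hp.le_one
      _ = c * c := by rw [mul_one]
      _ ≤ 1 := hc1
  calc p * c * p * c * p = p * (c * p * c) * p := by simp only [mul_assoc]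
    _ ≤ p * 1 * p := hp.isSelfAdjoint.conjugate_le_conjugate hcpc
    _ = p := by rw [mul_one, hp.isIdempotentElem.eq]

theorem localization_conjugate_le (hp : IsStarProjection p) {c : R} (hc : IsSelfAdjoint c)
    (hc1 : c * c ≤ 1) : localization p c * p * localization p c ≤ p := by
  have hpp : p * p = p := hp.isIdempotentElem
  calc localization p c * p * localization p c
        = localization p c * p * (p * localization p c) := by
        rw [← mul_assoc, mul_assoc _ p p, hpp]
    _ = p * c * p * c * p := by
        rw [localization_mul hp, mul_localization hp]
        simp only [← mul_assoc]
        rw [mul_assoc (p * c) p p, hpp]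
    _ ≤ p := hp.conjugate_conjugate_le_self hc hc1

theorem neg_le_localization_conjugate (hp : IsStarProjection p) {c q : R}
    (hc : IsSelfAdjoint c) (hc1 : c * c ≤ 1) (hq : -p ≤ q) :
    -p ≤ localization p c * q * localization p c :=
  calc -p ≤ -(localization p c * p * localization p c) :=
        neg_le_neg (hp.localization_conjugate_le hc hc1)
    _ = localization p c * -p * localization p c := by noncomm_ring
    _ ≤ localization p c * q * localization p c :=
        (hp.isSelfAdjoint_localization hc).conjugate_le_conjugate hq

theorem localization_conjugate_le_one_sub (hp : IsStarProjection p) {c q : R}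
    (hc : IsSelfAdjoint c) (hc1 : c * c ≤ 1) (hq : q ≤ 1 - p) :
    localization p c * q * localization p c ≤ 1 - p := by
  have := hp.one_sub.neg_le_localization_conjugate hc hc1 (neg_le_neg hq)
  rwa [localization_one_sub, mul_neg, neg_mul, neg_le_neg_iff] at this

end IsStarProjection

theorem loewnerLE_iff_le {H : Type*} [NormedAddCommGroup H] [InnerProductSpace ℂ H]
    [CompleteSpace H] {A B : H →L[ℂ] H} : LoewnerLE A B ↔ A ≤ B := by
  refine ⟨fun h => ?_, fun h x => h.inner_nonneg_right x⟩
  rw [ContinuousLinearMap.le_def, ContinuousLinearMap.isPositive_iff_complex]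
  intro x
  obtain ⟨r, hr, hx⟩ := RCLike.nonneg_iff_exists_ofReal.mp (h x)
  rw [← inner_conj_symm, ← hx]
  simpa using hr

theorem stmt2_general {H : Type*} [NormedAddCommGroup H] [InnerProductSpace ℂ H] [CompleteSpace H]
    (P : H →L[ℂ] H) (hP : IsSelfAdjoint P) (hP2 : P * P = P)
    (χ : H →L[ℂ] H) (hχ : IsSelfAdjoint χ) (hχ1 : LoewnerLE (χ * χ) 1)
    (X : H →L[ℂ] H) (hX : X = P * χ * P + (1 - P) * χ * (1 - P))
    (Q : H →L[ℂ] H)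
    (hQl : LoewnerLE (-P) Q) (hQu : LoewnerLE Q (1 - P)) :
    LoewnerLE (-P) (X * Q * X) ∧ LoewnerLE (X * Q * X) (1 - P) := by
  obtain rfl : X = localization P χ := hX
  have hProj : IsStarProjection P := ⟨hP2, hP⟩
  simp only [loewnerLE_iff_le] at hχ1 hQl hQu ⊢
  exact ⟨hProj.neg_le_localization_conjugate hχ hχ1 hQl,
    hProj.localization_conjugate_le_one_sub hχ hχ1 hQu⟩

theorem stmt2 {H : Type*} [NormedAddCommGroup H] [InnerProductSpace ℂ H] [CompleteSpace H]
    (P : H →L[ℂ] H) (hP : IsSelfAdjoint P) (hP2 : P * P = P)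
    (χ : H →L[ℂ] H) (hχ : IsSelfAdjoint χ) (hχ1 : LoewnerLE (χ * χ) 1)
    (X : H →L[ℂ] H) (hX : X = P * χ * P + (1 - P) * χ * (1 - P))
    (Q : H →L[ℂ] H) (hQ : IsSelfAdjoint Q)
    (hQl : LoewnerLE (-P) Q) (hQu : LoewnerLE Q (1 - P)) :
    LoewnerLE (-P) (X * Q * X) ∧ LoewnerLE (X * Q * X) (1 - P) :=
  stmt2_general P hP hP2 χ hχ hχ1 X hX Q hQl hQu
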